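/- (Lemma 3.7, prime_nilpotent.) Let m ≥ 1, let p_1, …, p_m be distinct primes and r_1, …, r_m positive integers, and set H = ⊕_{s=1}^m ℤ/p_s^{r_s}ℤ. Let G be an abelian group such that for no s is ℤ/p_s^{r_s}ℤ a direct summand of G. Then every additive endomorphism of H that factors through G is nilpotent; that is, for all additive homomorphisms u : H → G and v : G → H, the composite v ∘ u is a nilpotent endomorphism of H. -/

import Mathlib

/-!
Since the `p_s ^ r_s` are pairwise coprime, `H` is a quotient of `ℤ` (Chinese remainder theorem),
so every additive endomorphism `e` of `H` is multiplication by `a = e 1`, and is nilpotent as soon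
as every coordinate `a s` is nilpotent in `ZMod (p_s ^ r_s)`. There the non-units are nilpotent,
while if `a s` were a unit, `x ↦ (a s)⁻¹ * v (u (single s x)) s` would split `ZMod (p_s ^ r_s)`
off `G`.
-/

/-- View an additive endomorphism as an element of the endomorphism monoid, so that
powers make sense. -/
def toEnd {A : Type*} [AddCommGroup A] (e : A →+ A) : AddMonoid.End A := e

/-- An additive endomorphism is nilpotent if `e^k = 0` for some `k ≥ 1`. -/
def IsNilpotentEnd {A : Type*} [AddCommGroup A] (e : A →+ A) : Prop :=
  ∃ k : ℕ, 1 ≤ k ∧ toEnd e ^ k = 0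

open scoped Function

lemma IsNilpotentEnd.of_isNilpotent {A : Type*} [AddCommGroup A] {e : A →+ A}
    (h : IsNilpotent (toEnd e)) : IsNilpotentEnd e := by
  obtain ⟨k, hk⟩ := h
  exact ⟨k + 1, k.succ_pos, by rw [pow_succ, hk, zero_mul]⟩

lemma AddMonoidHom.apply_eq_mul_map_one {R : Type*} [Ring R]
    (hR : Function.Surjective (Int.cast : ℤ → R)) (f : R →+ R) (x : R) : f x = x * f 1 := by
  obtain ⟨n, rfl⟩ := hR x
  rw [← zsmul_one, map_zsmul, zsmul_eq_mul, zsmul_one]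

lemma isNilpotentEnd_of_isNilpotent_map_one {R : Type*} [CommRing R]
    (hR : Function.Surjective (Int.cast : ℤ → R)) (f : R →+ R) (h : IsNilpotent (f 1)) :
    IsNilpotentEnd f := by
  have hf : toEnd f = Module.toAddMonoidEnd R R (f 1) :=
    AddMonoidHom.ext fun x => (f.apply_eq_mul_map_one hR x).trans (mul_comm _ _)
  exact IsNilpotentEnd.of_isNilpotent (hf ▸ h.map _)

lemma isNilpotent_pi_of_forall {ι : Type*} [Finite ι] {R : ι → Type*}
    [∀ i, MonoidWithZero (R i)] {x : ∀ i, R i} (h : ∀ i, IsNilpotent (x i)) : IsNilpotent x := by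
  cases nonempty_fintype ι
  choose n hn using h
  exact ⟨∑ i, n i, funext fun i =>
    pow_eq_zero_of_le (Finset.single_le_sum (fun _ _ => Nat.zero_le _) (Finset.mem_univ i)) (hn i)⟩

lemma ZMod.intCast_surjective_pi {ι : Type*} [Fintype ι] {n : ι → ℕ}
    (hn : Pairwise (Nat.Coprime on n)) : Function.Surjective (Int.cast : ℤ → ∀ i, ZMod (n i)) := by
  intro x
  obtain ⟨k, hk⟩ := ZMod.intCast_surjective ((ZMod.prodEquivPi n hn).symm x)
  exact ⟨k, by rw [← map_intCast (ZMod.prodEquivPi n hn), hk, RingEquiv.apply_symm_apply]⟩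

lemma ZMod.isNilpotent_of_not_isUnit {p r : ℕ} (hp : p.Prime) {a : ZMod (p ^ r)}
    (ha : ¬IsUnit a) : IsNilpotent a := by
  have : NeZero (p ^ r) := ⟨pow_ne_zero _ hp.ne_zero⟩
  rw [← ZMod.natCast_zmod_val a] at ha ⊢
  have hdvd : p ∣ a.val := by
    by_contra hndvd
    exact ha ((ZMod.isUnit_iff_coprime _ _).2
      (((hp.coprime_iff_not_dvd).2 hndvd).symm.pow_right r))
  obtain ⟨c, hc⟩ := hdvd
  exact ⟨r, by rw [hc, Nat.cast_mul, mul_pow, ← Nat.cast_pow, ZMod.natCast_self, zero_mul]⟩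

lemma exists_addEquiv_prod_of_leftInverse {A : Type*} {G : Type u} [AddCommGroup A]
    [AddCommGroup G] (i : A →+ G) (π : G →+ A) (h : Function.LeftInverse π i) :
    ∃ (K : Type u) (_ : AddCommGroup K), Nonempty (G ≃+ A × K) := by
  refine ⟨π.ker, inferInstance, ⟨?_⟩⟩
  exact
    { toFun := fun g => (π g, ⟨g - i (π g), by simp [AddMonoidHom.mem_ker, h (π g)]⟩)
      invFun := fun x => i x.1 + x.2.1
      left_inv := fun g => by simp
      right_inv := fun x => by
        have hx : π x.2.1 = 0 := x.2.2
        ext <;> simp [hx, h x.1]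
      map_add' := fun g g' => by
        ext
        · simp
        · simp; abel }

lemma exists_addEquiv_prod_of_isUnit_apply {ι : Type*} [DecidableEq ι] {R : ι → Type*}
    [∀ i, CommRing (R i)] {G : Type u} [AddCommGroup G] (u : (∀ i, R i) →+ G)
    (v : G →+ ∀ i, R i) {a : ∀ i, R i} (hvu : ∀ x, v (u x) = x * a) (i : ι)
    (ha : IsUnit (a i)) : ∃ (K : Type u) (_ : AddCommGroup K), Nonempty (G ≃+ R i × K) := by
  obtain ⟨w, hw⟩ := ha
  refine exists_addEquiv_prod_of_leftInverse (u.comp (AddMonoidHom.single R i))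
    ((AddMonoidHom.mulLeft (↑w⁻¹ : R i)).comp ((Pi.evalAddMonoidHom R i).comp v)) fun x => ?_
  simp [hvu, ← hw, mul_left_comm]

theorem prime_nilpotent.{u} {m : ℕ} (hm : 1 ≤ m)
    (p : Fin m → ℕ) (hp : ∀ s, (p s).Prime) (hinj : Function.Injective p)
    (r : Fin m → ℕ) (hr : ∀ s, 1 ≤ r s)
    {G : Type u} [AddCommGroup G]
    (hG : ∀ s : Fin m,
      ¬ ∃ (K : Type u) (_ : AddCommGroup K), Nonempty (G ≃+ ZMod (p s ^ r s) × K))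
    (u : (∀ s, ZMod (p s ^ r s)) →+ G) (v : G →+ ∀ s, ZMod (p s ^ r s)) :
    IsNilpotentEnd (v.comp u) := by
  have hcop : Pairwise (Nat.Coprime on fun s => p s ^ r s) := fun s t hst =>
    ((Nat.coprime_primes (hp s) (hp t)).2 (hinj.ne hst)).pow _ _
  have hsurj := ZMod.intCast_surjective_pi hcop
  refine isNilpotentEnd_of_isNilpotent_map_one hsurj _ (isNilpotent_pi_of_forall fun s => ?_)
  exact ZMod.isNilpotent_of_not_isUnit (hp s) fun hunit => hG s <|
    exists_addEquiv_prod_of_isUnit_apply u v ((v.comp u).apply_eq_mul_map_one hsurj) s hunit
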